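/- For integers s ≥ t ≥ 2, the strong metric dimension of the modular product of the stars K_{1,s} and K_{1,t} is dim_s(K_{1,s}⋄K_{1,t}) = st + s − 1 if t = 2, and dim_s(K_{1,s}⋄K_{1,t}) = st + s if t > 2. -/

import Mathlib

open SimpleGraph

/-- The closed neighborhood `N[v]` of a vertex. -/
def closedNbr {α : Type*} (G : SimpleGraph α) (v : α) : Set α :=
  insert v (G.neighborSet v)

/-- The modular product `G ⋄ H`. -/
def modularProduct {α β : Type*} (G : SimpleGraph α) (H : SimpleGraph β) :
    SimpleGraph (α × β) :=
  SimpleGraph.fromRel (fun x y =>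
    (x.1 = y.1 ∧ H.Adj x.2 y.2) ∨
    (G.Adj x.1 y.1 ∧ x.2 = y.2) ∨
    (G.Adj x.1 y.1 ∧ H.Adj x.2 y.2) ∨
    (x.1 ≠ y.1 ∧ x.2 ≠ y.2 ∧ ¬ G.Adj x.1 y.1 ∧ ¬ H.Adj x.2 y.2))

/-- `{g, g'}` is a `γ_G`-pair: the closed neighborhoods are disjoint and cover `V(G)`. -/
def gammaPair {α : Type*} (G : SimpleGraph α) (g g' : α) : Prop :=
  closedNbr G g ∩ closedNbr G g' = ∅ ∧ closedNbr G g ∪ closedNbr G g' = Set.univ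

/-- A universal vertex. -/
def IsUniversal {α : Type*} (G : SimpleGraph α) (v : α) : Prop :=
  closedNbr G v = Set.univ

/-- A complete graph: every two distinct vertices are adjacent. -/
def IsCompleteGraph {α : Type*} (G : SimpleGraph α) : Prop :=
  ∀ u v : α, u ≠ v → G.Adj u v

/-- `G` is a disjoint union of two cliques. -/
def TwoCliques {α : Type*} (G : SimpleGraph α) : Prop :=
  ∃ A B : Set α, A.Nonempty ∧ B.Nonempty ∧ A ∪ B = Set.univ ∧ A ∩ B = ∅ ∧
    (∀ u ∈ A, ∀ v ∈ A, u ≠ v → G.Adj u v) ∧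
    (∀ u ∈ B, ∀ v ∈ B, u ≠ v → G.Adj u v) ∧
    (∀ u ∈ A, ∀ v ∈ B, ¬ G.Adj u v)

/-- `u` and `v` are mutually maximally distant in `X`. -/
def MMD {α : Type*} (X : SimpleGraph α) (u v : α) : Prop :=
  (∀ w, X.Adj u w → X.edist w v ≤ X.edist u v) ∧
  (∀ w, X.Adj v w → X.edist w u ≤ X.edist u v)

/-- A strong resolving set of `X`. -/
def IsStrongResolvingSet {α : Type*} (X : SimpleGraph α) (S : Set α) : Prop :=
  ∀ u v : α, u ≠ v → ∃ w ∈ S,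
    X.dist u w = X.dist u v + X.dist v w ∨ X.dist v w = X.dist v u + X.dist u w

/-- The strong metric dimension of `X`. -/
noncomputable def sdim {α : Type*} (X : SimpleGraph α) : ℕ :=
  sInf {n | ∃ S : Set α, S.ncard = n ∧ IsStrongResolvingSet X S}

/-- The star `K_{1,n}`: the center is `none`, the leaves are `some i`. -/
def starGraph (n : ℕ) : SimpleGraph (Option (Fin n)) :=
  SimpleGraph.fromRel (fun u v => u = none ∧ v ≠ none)

/-- The vertex cover number `β(X)`. -/
noncomputable def vertexCoverNumber {γ : Type*} (X : SimpleGraph γ) : ℕ :=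
  sInf {n | ∃ C : Set γ, C.ncard = n ∧ ∀ u v, X.Adj u v → u ∈ C ∨ v ∈ C}


/-!
`K_{1,s} ⋄ K_{1,t}` has the universal vertex (center, center), so its diameter is at most two.
In such a graph a non-adjacent pair can only be strongly resolved by one of its own vertices,
while an adjacent pair `u, v` is strongly resolved by any vertex of `N[u] Δ N[v]`. The product has
no closed twins, because `N[x]` meets `{center} × V(K_{1,t})` in `{center} × N[x.2]` (and
symmetrically) and stars with at least two leaves have none. Hence `S` is strong resolving iff its
complement is a clique, and `dim_s = |V| - ω`. A clique containing two leaf × leaf vertices with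
distinct second coordinates has no other vertex with exactly one center coordinate, so it is
injective in the second coordinate and has at most `t + 1` vertices; any other clique has at most
one vertex of each of the four kinds leaf/center × leaf/center. Both bounds are attained.
-/

section ClosedNbr

variable {α β : Type*} {G : SimpleGraph α} {H : SimpleGraph β}

lemma mem_closedNbr {u v : α} : u ∈ closedNbr G v ↔ u = v ∨ G.Adj v u :=
  Set.mem_insert_iff

lemma mem_closedNbr_comm {u v : α} : u ∈ closedNbr G v ↔ v ∈ closedNbr G u := by
  simp only [mem_closedNbr, eq_comm, G.adj_comm]

lemma SimpleGraph.IsUniversal.mem_closedNbr {c : α} (hc : G.IsUniversal c) (v : α) :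
    v ∈ closedNbr G c :=
  _root_.mem_closedNbr.2 (or_iff_not_imp_left.2 fun h ↦ hc (Ne.symm h))

lemma SimpleGraph.IsUniversal.ediam_le_two {c : α} (hc : G.IsUniversal c) : G.ediam ≤ 2 :=
  calc G.ediam ≤ 2 * G.eccent c := G.ediam_le_two_mul_eccent c
    _ ≤ 2 * 1 := by gcongr; exact (G.eccent_le_one_iff c).2 hc
    _ = 2 := mul_one 2

lemma modularProduct_adj {x y : α × β} :
    (modularProduct G H).Adj x y ↔
      x ≠ y ∧ (x.1 ∈ closedNbr G y.1 ↔ x.2 ∈ closedNbr H y.2) := by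
  obtain ⟨g, h⟩ := x
  obtain ⟨g', h'⟩ := y
  simp only [modularProduct, fromRel_adj, mem_closedNbr, ne_eq, Prod.mk.injEq]
  constructor
  · rintro ⟨hne, hr | hr⟩ <;> exact ⟨hne, by grind [SimpleGraph.adj_comm]⟩
  · rintro ⟨hne, hiff⟩
    exact ⟨hne, Or.inl (by grind [SimpleGraph.adj_comm])⟩

lemma isClique_modularProduct_iff {T : Set (α × β)} :
    (modularProduct G H).IsClique T ↔
      ∀ x ∈ T, ∀ y ∈ T, (x.1 ∈ closedNbr G y.1 ↔ x.2 ∈ closedNbr H y.2) := by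
  refine ⟨fun hT x hx y hy ↦ ?_, fun hT x hx y hy hxy ↦ modularProduct_adj.2 ⟨hxy, hT x hx y hy⟩⟩
  obtain rfl | hxy := eq_or_ne x y
  · exact iff_of_true (mem_closedNbr.2 (Or.inl rfl)) (mem_closedNbr.2 (Or.inl rfl))
  · exact (modularProduct_adj.1 (hT hx hy hxy)).2

lemma SimpleGraph.IsUniversal.modularProduct {c : α} {d : β} (hc : G.IsUniversal c)
    (hd : H.IsUniversal d) : (_root_.modularProduct G H).IsUniversal (c, d) := fun _ hx ↦
  modularProduct_adj.2 ⟨hx, iff_of_true (mem_closedNbr_comm.1 (hc.mem_closedNbr _))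
    (mem_closedNbr_comm.1 (hd.mem_closedNbr _))⟩

lemma mem_closedNbr_modularProduct_of_isUniversal_left {c : α} (hc : G.IsUniversal c)
    (h : β) (x : α × β) :
    (c, h) ∈ closedNbr (modularProduct G H) x ↔ h ∈ closedNbr H x.2 := by
  rw [mem_closedNbr, modularProduct_adj, mem_closedNbr_comm (v := x.2)]
  have hx : x.1 ∈ closedNbr G c := hc.mem_closedNbr x.1
  constructor
  · rintro (rfl | ⟨-, hiff⟩)
    · exact _root_.mem_closedNbr.2 (Or.inl rfl)
    · exact hiff.1 hx
  · intro hh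
    by_cases hxc : x = (c, h)
    · exact Or.inl hxc.symm
    · exact Or.inr ⟨hxc, iff_of_true hx hh⟩

lemma mem_closedNbr_modularProduct_of_isUniversal_right {d : β} (hd : H.IsUniversal d)
    (g : α) (x : α × β) :
    (g, d) ∈ closedNbr (modularProduct G H) x ↔ g ∈ closedNbr G x.1 := by
  rw [mem_closedNbr, modularProduct_adj, mem_closedNbr_comm (v := x.1)]
  have hx : x.2 ∈ closedNbr H d := hd.mem_closedNbr x.2
  constructor
  · rintro (rfl | ⟨-, hiff⟩)
    · exact _root_.mem_closedNbr.2 (Or.inl rfl)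
    · exact hiff.2 hx
  · intro hg
    by_cases hxd : x = (g, d)
    · exact Or.inl hxd.symm
    · exact Or.inr ⟨hxd, iff_of_true hg hx⟩

lemma injective_closedNbr_modularProduct {c : α} {d : β} (hc : G.IsUniversal c)
    (hd : H.IsUniversal d) (hG : Function.Injective (closedNbr G))
    (hH : Function.Injective (closedNbr H)) :
    Function.Injective (closedNbr (modularProduct G H)) := by
  intro x y hxy
  refine Prod.ext (hG (Set.ext fun g ↦ ?_)) (hH (Set.ext fun h ↦ ?_))
  · rw [← mem_closedNbr_modularProduct_of_isUniversal_right hd,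
      ← mem_closedNbr_modularProduct_of_isUniversal_right hd, hxy]
  · rw [← mem_closedNbr_modularProduct_of_isUniversal_left hc,
      ← mem_closedNbr_modularProduct_of_isUniversal_left hc, hxy]

end ClosedNbr

section StrongResolving

variable {α : Type*} {X : SimpleGraph α}

lemma dist_le_two_of_ediam_le_two (hX : X.ediam ≤ 2) (u v : α) : X.dist u v ≤ 2 := by
  have hreach : X.Reachable u v :=
    preconnected_of_ediam_ne_top (ne_top_of_le_ne_top (by decide) hX) u v
  have : (X.dist u v : ℕ∞) ≤ 2 := hreach.coe_dist_eq_edist ▸ X.edist_le_ediam.trans hX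
  exact_mod_cast this

lemma pos_dist_of_ediam_le_two (hX : X.ediam ≤ 2) {u v : α} (huv : u ≠ v) : 0 < X.dist u v :=
  (preconnected_of_ediam_ne_top (ne_top_of_le_ne_top (by decide) hX) u v).pos_dist_of_ne huv

lemma dist_eq_two_of_ediam_le_two (hX : X.ediam ≤ 2) {u v : α} (huv : u ≠ v)
    (hadj : ¬ X.Adj u v) : X.dist u v = 2 := by
  have := dist_le_two_of_ediam_le_two hX u v
  have := pos_dist_of_ediam_le_two hX huv
  have : X.dist u v ≠ 1 := mt dist_eq_one_iff_adj.1 hadj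
  omega

lemma isClique_compl_of_isStrongResolvingSet (hX : X.ediam ≤ 2) {S : Set α}
    (hS : IsStrongResolvingSet X S) : X.IsClique Sᶜ := by
  intro u hu v hv huv
  by_contra hadj
  obtain ⟨w, hwS, hw⟩ := hS u v huv
  have := dist_le_two_of_ediam_le_two hX u w
  have := dist_le_two_of_ediam_le_two hX v w
  have := pos_dist_of_ediam_le_two hX (u := u) (v := w) (by rintro rfl; exact hu hwS)
  have := pos_dist_of_ediam_le_two hX (u := v) (v := w) (by rintro rfl; exact hv hwS)
  have := dist_eq_two_of_ediam_le_two hX huv hadj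
  have := dist_eq_two_of_ediam_le_two hX huv.symm (mt X.adj_symm hadj)
  omega

lemma exists_mem_dist_eq_dist_add_dist (hX : X.ediam ≤ 2) {S : Set α} (hS : X.IsClique Sᶜ)
    {u v : α} (hv : v ∉ S) (huv : X.Adj u v) (hw : ∃ w ∈ closedNbr X u, w ∉ closedNbr X v) :
    ∃ w ∈ S, X.dist v w = X.dist v u + X.dist u w := by
  obtain ⟨w, hwu, hwv⟩ := hw
  simp only [mem_closedNbr, not_or] at hwu hwv
  have hwu : X.Adj u w := hwu.resolve_left fun h ↦ hwv.2 (h ▸ huv.symm)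
  refine ⟨w, by_contra fun hwS ↦ hwv.2 (hS hv hwS (Ne.symm hwv.1)), ?_⟩
  rw [dist_eq_two_of_ediam_le_two hX (Ne.symm hwv.1) hwv.2, X.dist_comm,
    dist_eq_one_iff_adj.2 huv, dist_eq_one_iff_adj.2 hwu]

lemma isStrongResolvingSet_of_isClique_compl (hX : X.ediam ≤ 2)
    (htwin : Function.Injective (closedNbr X)) {S : Set α} (hS : X.IsClique Sᶜ) :
    IsStrongResolvingSet X S := by
  intro u v huv
  by_cases hu : u ∈ S
  · exact ⟨u, hu, Or.inr (by rw [X.dist_self, add_zero])⟩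
  by_cases hv : v ∈ S
  · exact ⟨v, hv, Or.inl (by rw [X.dist_self, add_zero])⟩
  have hadj : X.Adj u v := hS hu hv huv
  obtain ⟨w, hw, hwv⟩ | ⟨w, hw, hwu⟩ : (∃ w ∈ closedNbr X u, w ∉ closedNbr X v) ∨
      ∃ w ∈ closedNbr X v, w ∉ closedNbr X u := by
    by_contra! h
    exact htwin.ne huv (Set.Subset.antisymm h.1 h.2)
  · obtain ⟨w, hwS, hw⟩ := exists_mem_dist_eq_dist_add_dist hX hS hv hadj ⟨w, hw, hwv⟩
    exact ⟨w, hwS, Or.inr hw⟩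
  · obtain ⟨w, hwS, hw⟩ := exists_mem_dist_eq_dist_add_dist hX hS hu hadj.symm ⟨w, hw, hwu⟩
    exact ⟨w, hwS, Or.inl hw⟩

lemma SimpleGraph.IsClique.ncard_le_cliqueNum [Finite α] {S : Set α} (hS : X.IsClique S) :
    S.ncard ≤ X.cliqueNum := by
  obtain ⟨K, rfl⟩ := S.toFinite.exists_finset_coe
  rw [Set.ncard_coe_finset]
  exact hS.card_le_cliqueNum

lemma sdim_eq_card_sub_cliqueNum [Fintype α] (hX : X.ediam ≤ 2)
    (htwin : Function.Injective (closedNbr X)) : sdim X = Fintype.card α - X.cliqueNum := by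
  refine IsLeast.csInf_eq ⟨?_, ?_⟩
  · obtain ⟨K, hK⟩ := X.exists_isNClique_cliqueNum
    refine ⟨(↑K)ᶜ, ?_, isStrongResolvingSet_of_isClique_compl hX htwin (by simpa using hK.isClique)⟩
    rw [Set.ncard_compl, Set.ncard_coe_finset, hK.card_eq, Nat.card_eq_fintype_card]
  · rintro _ ⟨S, rfl, hS⟩
    have := (isClique_compl_of_isStrongResolvingSet hX hS).ncard_le_cliqueNum
    have := Set.ncard_add_ncard_compl S
    rw [Nat.card_eq_fintype_card] at this
    omega

end StrongResolving

section Star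

variable {V ι : Type*}

lemma starGraph_eq_starGraph_none (n : ℕ) :
    _root_.starGraph n = SimpleGraph.starGraph (none : Option (Fin n)) := by
  ext u v
  rw [_root_.starGraph, fromRel_adj, starGraph_adj]
  cases u <;> cases v <;> simp

lemma mem_closedNbr_starGraph {r u v : V} :
    u ∈ closedNbr (starGraph r) v ↔ u = v ∨ u = r ∨ v = r := by
  rw [mem_closedNbr, starGraph_adj]
  grind

lemma injective_closedNbr_starGraph_none [Nontrivial ι] :
    Function.Injective (closedNbr (starGraph (none : Option ι))) := by
  have hcenter (i : ι) : closedNbr (starGraph none) none ≠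
      closedNbr (starGraph none) (some i) := by
    obtain ⟨j, hj⟩ := exists_ne i
    intro h
    have := h ▸ isUniversal_starGraph_self.mem_closedNbr (some j)
    simp [mem_closedNbr_starGraph, hj] at this
  rintro (_ | i) (_ | j) h
  · rfl
  · exact absurd h (hcenter j)
  · exact absurd h.symm (hcenter i)
  · have : some i ∈ closedNbr (starGraph none) (some j) :=
      h ▸ mem_closedNbr.2 (Or.inl rfl)
    simpa [mem_closedNbr_starGraph] using this

end Star

namespace StarModularProduct

variable {ι κ : Type*} {T : Set (Option ι × Option κ)}

lemma injOn_snd_of_isClique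
    (hT : (modularProduct (starGraph none) (starGraph none)).IsClique T) {i k : ι} {j l : κ}
    (hij : (some i, some j) ∈ T) (hkl : (some k, some l) ∈ T) (hjl : j ≠ l) :
    T.InjOn Prod.snd := by
  -- `(none, some m) ∈ T` would force `m = j` and `m = l`; `(some m, none) ∈ T` would force
  -- `m = i` and `m = k`, while the edge between the two leaf × leaf vertices forces `i ≠ k`.
  simp only [isClique_modularProduct_iff, mem_closedNbr_starGraph] at hT
  rintro ⟨a, b⟩ hx ⟨c, d⟩ hy (rfl : b = d)
  have := hT _ hx _ hy
  have := hT _ hx _ hij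
  have := hT _ hx _ hkl
  have := hT _ hy _ hij
  have := hT _ hy _ hkl
  have := hT _ hij _ hkl
  rcases a with _ | a <;> rcases b with _ | b <;> rcases c with _ | c <;> simp_all

lemma injOn_isSome_of_isClique
    (hT : (modularProduct (starGraph none) (starGraph none)).IsClique T)
    (hsnd : ∀ i j k l, (some i, some j) ∈ T → (some k, some l) ∈ T → j = l) :
    T.InjOn fun x ↦ (x.1.isSome, x.2.isSome) := by
  simp only [isClique_modularProduct_iff, mem_closedNbr_starGraph] at hT
  rintro ⟨a, b⟩ hx ⟨c, d⟩ hy hxy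
  have := hT _ hx _ hy
  rcases a with _ | a <;> rcases b with _ | b <;> rcases c with _ | c <;> rcases d with _ | d <;>
    simp_all
  exact hsnd _ _ _ _ hx hy

lemma ncard_le_of_isClique [Fintype κ]
    (hT : (modularProduct (starGraph none) (starGraph none)).IsClique T) :
    T.ncard ≤ max 4 (Fintype.card κ + 1) := by
  by_cases hsnd : ∀ i j k l, (some i, some j) ∈ T → (some k, some l) ∈ T → j = l
  · calc T.ncard ≤ (Set.univ : Set (Bool × Bool)).ncard :=
          Set.ncard_le_ncard_of_injOn _ (fun _ _ ↦ trivial) (injOn_isSome_of_isClique hT hsnd)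
      _ = 4 := by simp [Set.ncard_univ]
      _ ≤ _ := le_max_left _ _
  · push Not at hsnd
    obtain ⟨i, j, k, l, hij, hkl, hjl⟩ := hsnd
    calc T.ncard ≤ (Set.univ : Set (Option κ)).ncard :=
          Set.ncard_le_ncard_of_injOn _ (fun _ _ ↦ trivial) (injOn_snd_of_isClique hT hij hkl hjl)
      _ = Fintype.card κ + 1 := by simp [Set.ncard_univ]
      _ ≤ _ := le_max_right _ _

lemma isClique_pair_prod_pair (i : ι) (j : κ) :
    (modularProduct (starGraph none) (starGraph none)).IsClique
      (({none, some i} : Set (Option ι)) ×ˢ ({none, some j} : Set (Option κ))) := by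
  rw [isClique_modularProduct_iff]
  rintro ⟨a, b⟩ ⟨ha, hb⟩ ⟨c, d⟩ ⟨hc, hd⟩
  simp only [Set.mem_insert_iff, Set.mem_singleton_iff] at ha hb hc hd
  rw [mem_closedNbr_starGraph, mem_closedNbr_starGraph]
  exact iff_of_true (by grind) (by grind)

lemma isClique_insert_range (f : κ ↪ ι) :
    (modularProduct (starGraph none) (starGraph none)).IsClique
      (insert (none, none) (Set.range fun j ↦ (some (f j), some j))) := by
  rw [isClique_modularProduct_iff]
  simp [mem_closedNbr_starGraph]

lemma ncard_insert_range [Fintype κ] (f : κ ↪ ι) :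
    (insert (none, none) (Set.range fun j ↦ (some (f j), some j)) :
      Set (Option ι × Option κ)).ncard = Fintype.card κ + 1 := by
  rw [Set.ncard_insert_of_notMem (by simp), ← Set.image_univ,
    Set.ncard_image_of_injective _ fun j l h ↦ by simpa using h, Set.ncard_univ,
    Nat.card_eq_fintype_card]

lemma cliqueNum_eq [Fintype ι] [Fintype κ] [Nonempty κ] (f : κ ↪ ι) :
    (modularProduct (starGraph (none : Option ι)) (starGraph (none : Option κ))).cliqueNum =
      max 4 (Fintype.card κ + 1) := by
  obtain ⟨j⟩ := ‹Nonempty κ›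
  refine le_antisymm ?_ (max_le ?_ ?_)
  · obtain ⟨K, hK⟩ := exists_isNClique_cliqueNum
    rw [← hK.card_eq, ← Set.ncard_coe_finset]
    exact ncard_le_of_isClique hK.isClique
  · have := (isClique_pair_prod_pair (f j) j).ncard_le_cliqueNum
    rwa [Set.ncard_prod, Set.ncard_pair (by simp), Set.ncard_pair (by simp)] at this
  · exact ncard_insert_range f ▸ (isClique_insert_range f).ncard_le_cliqueNum

lemma sdim_eq [Fintype ι] [Fintype κ] [Nontrivial ι] [Nontrivial κ] (f : κ ↪ ι) :
    sdim (modularProduct (starGraph (none : Option ι)) (starGraph (none : Option κ))) =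
      (Fintype.card ι + 1) * (Fintype.card κ + 1) - max 4 (Fintype.card κ + 1) := by
  have hι : (starGraph (none : Option ι)).IsUniversal none := isUniversal_starGraph_self
  have hκ : (starGraph (none : Option κ)).IsUniversal none := isUniversal_starGraph_self
  rw [sdim_eq_card_sub_cliqueNum (hι.modularProduct hκ).ediam_le_two
      (injective_closedNbr_modularProduct hι hκ injective_closedNbr_starGraph_none
        injective_closedNbr_starGraph_none),
    cliqueNum_eq f]
  simp

end StarModularProduct

/-- the strong metric dimension of the modular product of two stars. -/
theorem sdim_star_modularProduct_star (s t : ℕ) (hts : t ≤ s) (ht : 2 ≤ t) :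
    (t = 2 → sdim (modularProduct (_root_.starGraph s) (_root_.starGraph t)) = s * t + s - 1) ∧
    (2 < t → sdim (modularProduct (_root_.starGraph s) (_root_.starGraph t)) = s * t + s) := by
  have : Nontrivial (Fin t) := Fin.nontrivial_iff_two_le.2 ht
  have : Nontrivial (Fin s) := Fin.nontrivial_iff_two_le.2 (ht.trans hts)
  have h := StarModularProduct.sdim_eq (Fin.castLEEmb hts)
  simp only [Fintype.card_fin] at h
  rw [starGraph_eq_starGraph_none, starGraph_eq_starGraph_none, h]
  refine ⟨fun ht2 ↦ ?_, fun ht2 ↦ ?_⟩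
  · subst ht2
    grind
  · rw [max_eq_right (by omega)]
    grind
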